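/- Let G′ be a semi-Markovian causal graph with observed variables V′ and unobserved variables U′ such that there are no directed edges between observed variables and the bidirected edges of G′_{V′} form a spanning tree of V′; fix ε ∈ (0,1), fix V₁ ∈ V′, and let M₁ and M₂ be the SEMs in which every variable is binary, every unobserved variable is uniform on {0,1}, in M₁ every X ∈ V′ satisfies P^{M₁}(x | pa) = (1 − ε)·𝟙[x = ⊕pa] + ε/2, and in M₂ every X ∈ V′ ∖ {V₁} satisfies P^{M₂}(x | pa) = (1 − ε)·𝟙[x = ⊕pa] + ε/2 while P^{M₂}(v₁ | pa) = (1 − ε)·𝟙[v₁ = ¬(⊕pa)] + ε/2, where ⊕pa denotes the XOR of the parent values. Then for every strict subset A ⊊ V′ with |A| = n and every v ∈ dom(V′): Q^{M₁}[A](v) = Q^{M₂}[A](v) = 1/2ⁿ. -/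

import Mathlib

open scoped Classical

/-- A semi-Markovian causal graph: a DAG over a finite vertex set partitioned into
observed (`obs`) and unobserved (`unobs`) variables, where every unobserved variable
has no parents and exactly two (distinct, observed) children. -/
structure CausalGraph (ν : Type) [Fintype ν] [DecidableEq ν] where
  obs : Finset ν
  unobs : Finset ν
  disj : Disjoint obs unobs
  E : ν → ν → Prop
  edge_mem : ∀ x y, E x y → x ∈ obs ∪ unobs ∧ y ∈ obs ∪ unobs
  acyclic : ∀ x, ¬ Relation.TransGen E x x
  unobs_no_parent : ∀ u ∈ unobs, ∀ w, ¬ E w u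
  unobs_two_children : ∀ u ∈ unobs,
    ∃ a b, a ≠ b ∧ a ∈ obs ∧ b ∈ obs ∧ (∀ w, E u w ↔ w = a ∨ w = b)

namespace CausalGraph

variable {ν : Type} [Fintype ν] [DecidableEq ν]

def verts (G : CausalGraph ν) : Finset ν := G.obs ∪ G.unobs

/-- A structural equation model over the causal graph `G`: finite nonempty domains
(encoded as finite sets of naturals), a pmf for each unobserved variable, and a
conditional pmf (given an assignment to the parents) for each observed variable. -/
structure SEM (G : CausalGraph ν) where
  dom : ν → Finset ℕ
  dom_ne : ∀ x, (dom x).Nonempty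
  pU : ν → ℕ → ℝ
  pU_nonneg : ∀ u n, 0 ≤ pU u n
  pU_sum : ∀ u ∈ G.unobs, ∑ n ∈ dom u, pU u n = 1
  pO : ν → ℕ → (ν → ℕ) → ℝ
  pO_nonneg : ∀ x n pa, 0 ≤ pO x n pa
  pO_sum : ∀ x ∈ G.obs, ∀ pa : ν → ℕ, ∑ n ∈ dom x, pO x n pa = 1
  pO_par : ∀ x n (pa pa' : ν → ℕ), (∀ p, G.E p x → pa p = pa' p) → pO x n pa = pO x n pa'

namespace SEM

variable {G : CausalGraph ν}

/-- Full assignments: all variables of `G` get values in their domains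
(non-vertices are pinned to `0`). -/
noncomputable def fullAssign (M : SEM G) : Finset (ν → ℕ) :=
  Fintype.piFinset (fun x => if x ∈ G.verts then M.dom x else {0})

/-- Observed assignments `dom(V)`: observed variables get values in their domains
(all other coordinates are pinned to `0`). -/
noncomputable def obsAssign (M : SEM G) : Finset (ν → ℕ) :=
  Fintype.piFinset (fun x => if x ∈ G.obs then M.dom x else {0})

/-- `Q^M[S](v) = Σ_u Π_{X ∈ S} P(x | pa_G(X)) Π_{U} P(u)`. -/
noncomputable def Q (M : SEM G) (S : Finset ν) (v : ν → ℕ) : ℝ :=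
  ∑ w ∈ M.fullAssign.filter (fun w => ∀ x ∈ G.obs, w x = v x),
    (∏ x ∈ S, M.pO x (w x) w) * ∏ u ∈ G.unobs, M.pU u (w u)

/-- The observational distribution `P^M(v) = Q^M[V](v)`. -/
noncomputable def P (M : SEM G) (v : ν → ℕ) : ℝ := M.Q G.obs v

/-- Post-interventional probability `P^M_x(y)`: sum of `Q^M[V∖X]` over all observed
realizations consistent with `x` on `X` and `y` on `Y`. -/
noncomputable def Px (M : SEM G) (X : Finset ν) (x : ν → ℕ) (Y : Finset ν) (y : ν → ℕ) : ℝ :=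
  ∑ v ∈ M.obsAssign.filter (fun v => (∀ i ∈ X, v i = x i) ∧ (∀ i ∈ Y, v i = y i)),
    M.Q (G.obs \ X) v

/-- `M ∈ 𝕄⁺(G)`: strictly positive observational distribution. -/
def positive (M : SEM G) : Prop := ∀ v ∈ M.obsAssign, 0 < M.P v

end SEM

/-- The causal effect of `X` on `Y` is identifiable from `G`. -/
def Identifiable (G : CausalGraph ν) (X Y : Finset ν) : Prop :=
  ∀ M₁ M₂ : SEM G, M₁.positive → M₂.positive →
    (∀ i ∈ G.obs, M₁.dom i = M₂.dom i) →
    (∀ v ∈ M₁.obsAssign, M₁.P v = M₂.P v) →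
    ∀ x y : ν → ℕ, (∀ i ∈ X, x i ∈ M₁.dom i) → (∀ i ∈ Y, y i ∈ M₁.dom i) →
      M₁.Px X x Y y = M₂.Px X x Y y

/-- `Q[S]` is identifiable from `G`. -/
def QIdentifiable (G : CausalGraph ν) (S : Finset ν) : Prop :=
  Identifiable G (G.obs \ S) S

/-- The causal effect of `X` on `Y` is g-identifiable from `(𝔸, G)`. -/
def GIdentifiable (G : CausalGraph ν) (𝔸 : Finset (Finset ν)) (X Y : Finset ν) : Prop :=
  ∀ M₁ M₂ : SEM G, M₁.positive → M₂.positive →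
    (∀ i ∈ G.obs, M₁.dom i = M₂.dom i) →
    (∀ A ∈ 𝔸, ∀ v ∈ M₁.obsAssign, M₁.Q A v = M₂.Q A v) →
    ∀ x y : ν → ℕ, (∀ i ∈ X, x i ∈ M₁.dom i) → (∀ i ∈ Y, y i ∈ M₁.dom i) →
      M₁.Px X x Y y = M₂.Px X x Y y

/-- `Q[S]` is g-identifiable from `(𝔸, G)`. -/
def QGIdentifiable (G : CausalGraph ν) (𝔸 : Finset (Finset ν)) (S : Finset ν) : Prop :=
  GIdentifiable G 𝔸 (G.obs \ S) S

/-- Bidirected edge of `G_X` between `a` and `b`: distinct members of `X` sharing an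
unobserved parent (whose two children then necessarily both lie in `X`). -/
def biEdge (G : CausalGraph ν) (X : Finset ν) (a b : ν) : Prop :=
  a ≠ b ∧ a ∈ X ∧ b ∈ X ∧ ∃ u ∈ G.unobs, G.E u a ∧ G.E u b

/-- `X` is a single c-component of `G`. -/
def SingleC (G : CausalGraph ν) (X : Finset ν) : Prop :=
  X.Nonempty ∧ ∀ a ∈ X, ∀ b ∈ X, Relation.ReflTransGen (G.biEdge X) a b

/-- The c-components of `S`: connected components of the bidirected part of `G_S`. -/
noncomputable def cComponents (G : CausalGraph ν) (S : Finset ν) : Finset (Finset ν) :=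
  S.image (fun a => S.filter (fun b => Relation.ReflTransGen (G.biEdge S) a b))

/-- Directed edge of `G_X` (both endpoints in `X`). -/
def dirEdgeIn (G : CausalGraph ν) (X : Finset ν) (a b : ν) : Prop :=
  a ∈ X ∧ b ∈ X ∧ G.E a b

/-- `Anc_Y(G_X)`: members of `X` having a directed path in `G_X` to some member of `Y`. -/
noncomputable def ancIn (G : CausalGraph ν) (X Y : Finset ν) : Finset ν :=
  X.filter (fun a => ∃ y ∈ Y, Relation.ReflTransGen (G.dirEdgeIn X) a y)

/-- Unobserved vertices of the induced subgraph `G[A]`: unobserved vertices of `G`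
both of whose children lie in `A`. -/
noncomputable def inducedUnobs (G : CausalGraph ν) (A : Finset ν) : Finset ν :=
  G.unobs.filter (fun u => ∀ w, G.E u w → w ∈ A)

/-- The induced subgraph `G[A]`. -/
noncomputable def induced (G : CausalGraph ν) (A : Finset ν) : CausalGraph ν where
  obs := A ∩ G.obs
  unobs := G.inducedUnobs A
  disj := G.disj.mono Finset.inter_subset_right (Finset.filter_subset _ _)
  E x y := G.E x y ∧ x ∈ (A ∩ G.obs) ∪ G.inducedUnobs A ∧ y ∈ (A ∩ G.obs) ∪ G.inducedUnobs A
  edge_mem := fun x y h => ⟨h.2.1, h.2.2⟩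
  acyclic := fun x h => G.acyclic x (by
    have key : ∀ a b, Relation.TransGen (fun x y => G.E x y ∧ x ∈ (A ∩ G.obs) ∪ G.inducedUnobs A ∧
        y ∈ (A ∩ G.obs) ∪ G.inducedUnobs A) a b → Relation.TransGen G.E a b := by
      intro a b hab
      induction hab with
      | single hbc => exact Relation.TransGen.single hbc.1
      | tail _ hbc ih => exact Relation.TransGen.tail ih hbc.1
    exact key x x h)
  unobs_no_parent := fun u hu w hw =>
    G.unobs_no_parent u (Finset.mem_filter.mp hu).1 w hw.1
  unobs_two_children := by
    intro u hu
    have hu' := Finset.mem_filter.mp hu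
    obtain ⟨a, b, hab, ha, hb, hiff⟩ := G.unobs_two_children u hu'.1
    have hEa : G.E u a := (hiff a).mpr (Or.inl rfl)
    have hEb : G.E u b := (hiff b).mpr (Or.inr rfl)
    have haA : a ∈ A := hu'.2 a hEa
    have hbA : b ∈ A := hu'.2 b hEb
    refine ⟨a, b, hab, Finset.mem_inter.mpr ⟨haA, ha⟩, Finset.mem_inter.mpr ⟨hbA, hb⟩, ?_⟩
    intro w
    constructor
    · intro hw; exact (hiff w).mp hw.1
    · rintro (rfl | rfl)
      · exact ⟨hEa, Finset.mem_union.mpr (Or.inr hu),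
          Finset.mem_union.mpr (Or.inl (Finset.mem_inter.mpr ⟨haA, ha⟩))⟩
      · exact ⟨hEb, Finset.mem_union.mpr (Or.inr hu),
          Finset.mem_union.mpr (Or.inl (Finset.mem_inter.mpr ⟨hbA, hb⟩))⟩

/-- `H` is a subgraph of `G`. -/
def IsSubgraph (H G : CausalGraph ν) : Prop :=
  H.obs ⊆ G.obs ∧ H.unobs ⊆ G.unobs ∧ ∀ a b, H.E a b → G.E a b

/-- `H` is an `R`-rooted c-forest: `R` is the root set of `H`, the observed vertex set of
`H` is a single c-component, and every observed vertex has at most one child in `H`. -/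
def IsCForest (H : CausalGraph ν) (R : Finset ν) : Prop :=
  H.obs.filter (fun x => ∀ w, ¬ H.E x w) = R ∧
  H.SingleC H.obs ∧
  ∀ x ∈ H.obs, ∀ w w', H.E x w → H.E x w' → w = w'

end CausalGraph

/-- The XOR (mod-2 sum) of the values of the parents of `x` under the assignment `pa`. -/
noncomputable def CausalGraph.xorPa {ν : Type} [Fintype ν] [DecidableEq ν]
    (G : CausalGraph ν) (x : ν) (pa : ν → ℕ) : ℕ :=
  (∑ p ∈ Finset.univ.filter (fun p => G.E p x), pa p) % 2

/-
Since `A` is a strict subset of the single c-component `V'`, some bidirected edge leaves `A`: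
a latent `u` has one child `a ∈ A` and its other child outside `A`. Toggling `u` flips the parity
of the parents of `a` and of no other member of `A`, and in both models flipping that parity
complements the conditional law of `a`; since `u` is uniform, summing out `u` contributes exactly
the factor `1/2` and leaves `Q[A \ {a}]`. Peeling one vertex at a time down to `Q[∅] = 1` gives
`2^{-|A|}`.
-/

open Finset Function

section PiFinset

variable {ι : Type*} [DecidableEq ι]

def flipAt (i : ι) (w : ι → ℕ) : ι → ℕ := update w i (1 - w i)

@[simp]
lemma flipAt_apply_self (i : ι) (w : ι → ℕ) : flipAt i w i = 1 - w i :=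
  update_self ..

lemma flipAt_apply_of_ne {i j : ι} (h : j ≠ i) (w : ι → ℕ) : flipAt i w j = w j :=
  update_of_ne h ..

lemma flipAt_flipAt {i : ι} {w : ι → ℕ} (hw : w i ≤ 1) : flipAt i (flipAt i w) = w := by
  ext j
  obtain rfl | h := eq_or_ne j i
  · simp only [flipAt_apply_self]; omega
  · simp only [flipAt_apply_of_ne h]

variable [Fintype ι]

lemma Fintype.filter_piFinset_eq_piFinset_ite {α : Type*} [DecidableEq α] (g : ι → Finset α)
    (s : Finset ι) (v : ι → α) (hv : ∀ i ∈ s, v i ∈ g i) :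
    (Fintype.piFinset g).filter (fun w => ∀ i ∈ s, w i = v i) =
      Fintype.piFinset fun i => if i ∈ s then {v i} else g i := by
  ext w
  simp only [mem_filter, Fintype.mem_piFinset]
  constructor
  · rintro ⟨hw, hws⟩ i
    split_ifs with hi
    · exact mem_singleton.mpr (hws i hi)
    · exact hw i
  · intro hw
    have hws : ∀ i ∈ s, w i = v i := fun i hi => by simpa [hi] using hw i
    refine ⟨fun i => ?_, hws⟩
    by_cases hi : i ∈ s
    · rw [hws i hi]; exact hv i hi
    · simpa [hi] using hw i

lemma sum_piFinset_prod_eq_one {α R : Type*} [CommSemiring R] (g : ι → Finset α) (U : Finset ι)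
    (p : ι → α → R) (hp : ∀ i ∈ U, ∑ a ∈ g i, p i a = 1) (hg : ∀ i ∉ U, (g i).card = 1) :
    ∑ w ∈ Fintype.piFinset g, ∏ i ∈ U, p i (w i) = 1 := by
  calc ∑ w ∈ Fintype.piFinset g, ∏ i ∈ U, p i (w i)
      = ∏ i, ∑ a ∈ g i, if i ∈ U then p i a else 1 := by
        rw [prod_univ_sum]
        refine sum_congr rfl fun w _ => ?_
        rw [prod_ite_mem, univ_inter]
    _ = 1 := by
        refine prod_eq_one fun i _ => ?_
        by_cases hi : i ∈ U
        · simpa [hi] using hp i hi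
        · simp [hi, hg i hi]

lemma flipAt_mem_piFinset {g : ι → Finset ℕ} {i : ι} (hi : g i = {0, 1}) {w : ι → ℕ}
    (hw : w ∈ Fintype.piFinset g) : flipAt i w ∈ Fintype.piFinset g := by
  rw [Fintype.mem_piFinset] at hw ⊢
  intro j
  obtain rfl | h := eq_or_ne j i
  · have := hi ▸ hw j
    simp only [mem_insert, mem_singleton] at this
    rcases this with h0 | h1 <;> simp [*]
  · simpa only [flipAt_apply_of_ne h] using hw j

lemma le_one_of_mem_piFinset {g : ι → Finset ℕ} {i : ι} (hi : g i = {0, 1}) {w : ι → ℕ}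
    (hw : w ∈ Fintype.piFinset g) : w i ≤ 1 := by
  have := hi ▸ Fintype.mem_piFinset.mp hw i
  simp only [mem_insert, mem_singleton] at this
  omega

lemma sum_piFinset_comp_flipAt {M : Type*} [AddCommMonoid M] {g : ι → Finset ℕ} {i : ι}
    (hi : g i = {0, 1}) (F : (ι → ℕ) → M) :
    ∑ w ∈ Fintype.piFinset g, F (flipAt i w) = ∑ w ∈ Fintype.piFinset g, F w :=
  sum_nbij' (flipAt i) (flipAt i) (fun _ hw => flipAt_mem_piFinset hi hw)
    (fun _ hw => flipAt_mem_piFinset hi hw)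
    (fun _ hw => flipAt_flipAt (le_one_of_mem_piFinset hi hw))
    (fun _ hw => flipAt_flipAt (le_one_of_mem_piFinset hi hw)) (fun _ _ => rfl)

lemma sum_piFinset_eq_inv_two_mul {R : Type*} [Field R] [CharZero R] {g : ι → Finset ℕ} {i : ι}
    (hi : g i = {0, 1}) (F H : (ι → ℕ) → R)
    (hFH : ∀ w ∈ Fintype.piFinset g, F w + F (flipAt i w) = H w) :
    ∑ w ∈ Fintype.piFinset g, F w = 2⁻¹ * ∑ w ∈ Fintype.piFinset g, H w := by
  rw [← sum_congr rfl hFH, sum_add_distrib, sum_piFinset_comp_flipAt hi, ← two_mul,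
    inv_mul_cancel_left₀ two_ne_zero]

end PiFinset

lemma Relation.ReflTransGen.exists_mem_rel_notMem {α : Type*} {r : α → α → Prop} {s : Set α}
    {a b : α} (h : Relation.ReflTransGen r a b) (ha : a ∈ s) (hb : b ∉ s) :
    ∃ x ∈ s, ∃ y ∉ s, r x y := by
  induction h with
  | refl => exact absurd ha hb
  | @tail c d _ hcd ih =>
    by_cases hc : c ∈ s
    · exact ⟨c, hc, d, hb, hcd⟩
    · exact ih hc

namespace CausalGraph

variable {ν : Type} [Fintype ν] [DecidableEq ν] {G : CausalGraph ν}

lemma mem_verts_of_mem_obs {x : ν} (hx : x ∈ G.obs) : x ∈ G.verts :=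
  mem_union_left _ hx

lemma mem_verts_of_E {p x : ν} (h : G.E p x) : p ∈ G.verts :=
  (G.edge_mem p x h).1

lemma xorPa_lt_two (x : ν) (pa : ν → ℕ) : G.xorPa x pa < 2 :=
  Nat.mod_lt _ two_pos

lemma xorPa_flipAt_ne {u x : ν} (hux : G.E u x) {w : ν → ℕ} (hw : w u ≤ 1) :
    G.xorPa x (flipAt u w) ≠ G.xorPa x w := by
  have hu : u ∈ univ.filter (fun p => G.E p x) := mem_filter.mpr ⟨mem_univ u, hux⟩
  unfold xorPa
  have hrest : ∑ p ∈ (univ.filter fun p => G.E p x).erase u, flipAt u w p =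
      ∑ p ∈ (univ.filter fun p => G.E p x).erase u, w p :=
    sum_congr rfl fun p hp => flipAt_apply_of_ne (ne_of_mem_erase hp) w
  rw [← add_sum_erase _ _ hu, ← add_sum_erase _ _ hu, flipAt_apply_self, hrest]
  omega

lemma exists_unobs_with_unique_child_of_ssubset (hconn : G.SingleC G.obs) {A : Finset ν}
    (hA : A ⊂ G.obs) (hne : A.Nonempty) :
    ∃ a ∈ A, ∃ u ∈ G.unobs, G.E u a ∧ ∀ x ∈ A, G.E u x → x = a := by
  obtain ⟨a₀, ha₀⟩ := hne
  obtain ⟨b₀, hb₀, hb₀A⟩ := exists_of_ssubset hA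
  obtain ⟨a, haA, b, hbA, -, -, -, u, hu, hua, hub⟩ :=
    (hconn.2 a₀ (hA.subset ha₀) b₀ hb₀).exists_mem_rel_notMem (s := {x | x ∈ A}) ha₀ hb₀A
  refine ⟨a, haA, u, hu, hua, fun x hxA hux => ?_⟩
  obtain ⟨c, d, -, -, -, hchildren⟩ := G.unobs_two_children u hu
  rcases (hchildren a).mp hua with rfl | rfl <;> rcases (hchildren b).mp hub with rfl | rfl <;>
    rcases (hchildren x).mp hux with rfl | rfl <;> tauto

namespace SEM

def ParityBalanced (M : SEM G) (x : ν) : Prop :=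
  ∀ n ∈ ({0, 1} : Finset ℕ), ∀ pa pa' : ν → ℕ,
    (∀ p, G.E p x → pa p ∈ ({0, 1} : Finset ℕ)) → (∀ p, G.E p x → pa' p ∈ ({0, 1} : Finset ℕ)) →
    G.xorPa x pa ≠ G.xorPa x pa' → M.pO x n pa + M.pO x n pa' = 1

/-- `c 0 + c 1 = 1` says that `c` permutes `{0, 1}`. -/
lemma parityBalanced_of_pO_eq (M : SEM G) {x : ν} (ε : ℝ) (c : ℕ → ℕ) (hc : c 0 + c 1 = 1)
    (hpO : ∀ n ∈ ({0, 1} : Finset ℕ), ∀ pa : ν → ℕ, (∀ p, G.E p x → pa p ∈ ({0, 1} : Finset ℕ)) →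
      M.pO x n pa = (1 - ε) * (if n = c (G.xorPa x pa) then 1 else 0) + ε / 2) :
    M.ParityBalanced x := by
  intro n hn pa pa' hpa hpa' hne
  rw [hpO n hn pa hpa, hpO n hn pa' hpa']
  have hn : n ≤ 1 := by simp only [mem_insert, mem_singleton] at hn; omega
  have h := G.xorPa_lt_two x pa
  have h' := G.xorPa_lt_two x pa'
  have hsplit : (n = c (G.xorPa x pa) ∧ n ≠ c (G.xorPa x pa')) ∨
      (n ≠ c (G.xorPa x pa) ∧ n = c (G.xorPa x pa')) := by
    interval_cases (G.xorPa x pa) <;> interval_cases (G.xorPa x pa') <;> omega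
  rcases hsplit with ⟨h₁, h₂⟩ | ⟨h₁, h₂⟩
  · rw [if_pos h₁, if_neg h₂]; ring
  · rw [if_neg h₁, if_pos h₂]; ring

def fiberDom (M : SEM G) (v : ν → ℕ) (x : ν) : Finset ℕ :=
  if x ∈ G.obs then {v x} else if x ∈ G.verts then M.dom x else {0}

variable {M : SEM G} {v : ν → ℕ}

lemma Q_eq_sum_piFinset_fiberDom (hv : ∀ x ∈ G.obs, v x ∈ M.dom x) (S : Finset ν) :
    M.Q S v = ∑ w ∈ Fintype.piFinset (M.fiberDom v),
      (∏ x ∈ S, M.pO x (w x) w) * ∏ u ∈ G.unobs, M.pU u (w u) := by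
  unfold Q fullAssign
  rw [Fintype.filter_piFinset_eq_piFinset_ite _ _ _ fun x hx => by
    simpa [mem_verts_of_mem_obs hx] using hv x hx]
  rfl

lemma mem_dom_of_mem_piFinset_fiberDom (hv : ∀ x ∈ G.obs, v x ∈ M.dom x) {w : ν → ℕ}
    (hw : w ∈ Fintype.piFinset (M.fiberDom v)) {x : ν} (hx : x ∈ G.verts) : w x ∈ M.dom x := by
  have := Fintype.mem_piFinset.mp hw x
  unfold fiberDom at this
  split_ifs at this with hobs
  · exact mem_singleton.mp this ▸ hv x hobs
  · exact this

lemma Q_empty (hv : ∀ x ∈ G.obs, v x ∈ M.dom x) : M.Q ∅ v = 1 := by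
  rw [Q_eq_sum_piFinset_fiberDom hv]
  simp only [prod_empty, one_mul]
  refine sum_piFinset_prod_eq_one _ _ _ (fun u hu => ?_) (fun x hx => ?_)
  · have hu' : u ∉ G.obs := disjoint_right.mp G.disj hu
    simpa [fiberDom, hu', verts, hu] using M.pU_sum u hu
  · unfold fiberDom verts at *
    split_ifs with h₁ h₂ <;> simp_all

lemma Q_eq_inv_two_mul_Q_erase (hdom : ∀ i ∈ G.verts, M.dom i = {0, 1})
    (hv : ∀ x ∈ G.obs, v x ∈ M.dom x) {A : Finset ν} (hA : A ⊆ G.obs) {a u : ν} (ha : a ∈ A)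
    (hu : u ∈ G.unobs) (hua : G.E u a) (huA : ∀ x ∈ A, G.E u x → x = a)
    (hpU : M.pU u 0 = M.pU u 1) (hbal : M.ParityBalanced a) :
    M.Q A v = 2⁻¹ * M.Q (A.erase a) v := by
  have huobs : ∀ x ∈ G.obs, x ≠ u := fun x hx h => disjoint_left.mp G.disj hx (h ▸ hu)
  have hgu : M.fiberDom v u = {0, 1} := by
    simp [fiberDom, disjoint_right.mp G.disj hu, verts, hu, hdom u (mem_union_right _ hu)]
  rw [Q_eq_sum_piFinset_fiberDom hv, Q_eq_sum_piFinset_fiberDom hv]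
  refine sum_piFinset_eq_inv_two_mul hgu _ _ fun w hw => ?_
  have hw' := flipAt_mem_piFinset hgu hw
  have hbin : ∀ w' ∈ Fintype.piFinset (M.fiberDom v), ∀ p ∈ G.verts, w' p ∈ ({0, 1} : Finset ℕ) :=
    fun w' hw' p hp => hdom p hp ▸ mem_dom_of_mem_piFinset_fiberDom hv hw' hp
  have hflip_a : M.pO a (w a) w + M.pO a (flipAt u w a) (flipAt u w) = 1 := by
    rw [flipAt_apply_of_ne (huobs a (hA ha))]
    exact hbal _ (hbin w hw a (mem_verts_of_mem_obs (hA ha))) _ _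
      (fun p hp => hbin w hw p (mem_verts_of_E hp)) (fun p hp => hbin _ hw' p (mem_verts_of_E hp))
      (xorPa_flipAt_ne hua (le_one_of_mem_piFinset hgu hw)).symm
  have hflip_rest : ∏ x ∈ A.erase a, M.pO x (flipAt u w x) (flipAt u w) =
      ∏ x ∈ A.erase a, M.pO x (w x) w := by
    refine prod_congr rfl fun x hx => ?_
    have hx' := mem_of_mem_erase hx
    rw [flipAt_apply_of_ne (huobs x (hA hx'))]
    refine M.pO_par x _ _ _ fun p hp => flipAt_apply_of_ne ?_ w
    rintro rfl
    exact ne_of_mem_erase hx (huA x hx' hp)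
  have hflip_pU : ∏ u' ∈ G.unobs, M.pU u' (flipAt u w u') = ∏ u' ∈ G.unobs, M.pU u' (w u') := by
    refine prod_congr rfl fun u' _ => ?_
    obtain rfl | h := eq_or_ne u' u
    · have := le_one_of_mem_piFinset hgu hw
      interval_cases h : w u' <;> simp [h, hpU]
    · rw [flipAt_apply_of_ne h]
  rw [← mul_prod_erase A _ ha, ← mul_prod_erase A _ ha, hflip_rest, hflip_pU]
  linear_combination
    ((∏ x ∈ A.erase a, M.pO x (w x) w) * ∏ u' ∈ G.unobs, M.pU u' (w u')) * hflip_a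

theorem Q_eq_inv_two_pow_card (hconn : G.SingleC G.obs) (hdom : ∀ i ∈ G.verts, M.dom i = {0, 1})
    (hpU : ∀ u ∈ G.unobs, M.pU u 0 = M.pU u 1) (hbal : ∀ x ∈ G.obs, M.ParityBalanced x)
    (hv : ∀ x ∈ G.obs, v x ∈ M.dom x) {A : Finset ν} (hA : A ⊂ G.obs) :
    M.Q A v = 2⁻¹ ^ A.card := by
  induction A using Finset.strongInduction with
  | H A ih =>
    obtain rfl | hne := A.eq_empty_or_nonempty
    · rw [Q_empty hv, card_empty, pow_zero]
    obtain ⟨a, ha, u, hu, hua, huA⟩ := exists_unobs_with_unique_child_of_ssubset hconn hA hne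
    rw [Q_eq_inv_two_mul_Q_erase hdom hv hA.subset ha hu hua huA (hpU u hu)
        (hbal a (hA.subset ha)),
      ih _ (erase_ssubset ha) ((erase_subset a A).trans_ssubset hA), ← pow_succ',
      card_erase_add_one ha]

end SEM

end CausalGraph

theorem Q_eq_half_pow_of_strict_subset_general
    {ν : Type} [Fintype ν] [DecidableEq ν] (G' : CausalGraph ν)
    (hconn : G'.SingleC G'.obs)
    (ε : ℝ)
    (V₁ : ν)
    (M₁ M₂ : CausalGraph.SEM G')
    (hdom1 : ∀ i ∈ G'.verts, M₁.dom i = {0, 1})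
    (hdom2 : ∀ i ∈ G'.verts, M₂.dom i = {0, 1})
    (hU1 : ∀ u ∈ G'.unobs, ∀ n ∈ ({0, 1} : Finset ℕ), M₁.pU u n = 1/2)
    (hU2 : ∀ u ∈ G'.unobs, ∀ n ∈ ({0, 1} : Finset ℕ), M₂.pU u n = 1/2)
    (hO1 : ∀ x ∈ G'.obs, ∀ n ∈ ({0, 1} : Finset ℕ), ∀ pa : ν → ℕ,
      (∀ p, G'.E p x → pa p ∈ ({0, 1} : Finset ℕ)) →
      M₁.pO x n pa = (1 - ε) * (if n = G'.xorPa x pa then 1 else 0) + ε/2)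
    (hO2 : ∀ x ∈ G'.obs, x ≠ V₁ → ∀ n ∈ ({0, 1} : Finset ℕ), ∀ pa : ν → ℕ,
      (∀ p, G'.E p x → pa p ∈ ({0, 1} : Finset ℕ)) →
      M₂.pO x n pa = (1 - ε) * (if n = G'.xorPa x pa then 1 else 0) + ε/2)
    (hO2V : ∀ n ∈ ({0, 1} : Finset ℕ), ∀ pa : ν → ℕ,
      (∀ p, G'.E p V₁ → pa p ∈ ({0, 1} : Finset ℕ)) →
      M₂.pO V₁ n pa = (1 - ε) * (if n = 1 - G'.xorPa V₁ pa then 1 else 0) + ε/2) :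
    ∀ A : Finset ν, A ⊂ G'.obs → ∀ v ∈ M₁.obsAssign,
      M₁.Q A v = 1 / 2 ^ A.card ∧ M₂.Q A v = 1 / 2 ^ A.card := by
  intro A hA v hv
  have hv₁ : ∀ x ∈ G'.obs, v x ∈ M₁.dom x := fun x hx => by
    simpa [hx] using Fintype.mem_piFinset.mp hv x
  have hv₂ : ∀ x ∈ G'.obs, v x ∈ M₂.dom x := fun x hx => by
    have hx' := CausalGraph.mem_verts_of_mem_obs hx
    rw [hdom2 x hx', ← hdom1 x hx']
    exact hv₁ x hx
  have hbal₂ : ∀ x ∈ G'.obs, M₂.ParityBalanced x := fun x hx => by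
    obtain rfl | hxV := eq_or_ne x V₁
    · exact M₂.parityBalanced_of_pO_eq ε (1 - ·) rfl hO2V
    · exact M₂.parityBalanced_of_pO_eq ε id rfl (hO2 x hx hxV)
  rw [one_div, ← inv_pow]
  exact ⟨CausalGraph.SEM.Q_eq_inv_two_pow_card hconn hdom1
      (fun u hu => by rw [hU1 u hu 0 (by simp), hU1 u hu 1 (by simp)])
      (fun x hx => M₁.parityBalanced_of_pO_eq ε id rfl (hO1 x hx)) hv₁ hA,
    CausalGraph.SEM.Q_eq_inv_two_pow_card hconn hdom2
      (fun u hu => by rw [hU2 u hu 0 (by simp), hU2 u hu 1 (by simp)]) hbal₂ hv₂ hA⟩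

/-- Appendix D, first lemma. In the two XOR-type models `M₁`, `M₂`
on a graph whose bidirected edges form a spanning tree of `V'` and which has no
directed edges between observed variables, `Q^{M₁}[A](v) = Q^{M₂}[A](v) = 1/2^{|A|}`
for every strict subset `A ⊊ V'` and every realization `v`. -/
theorem Q_eq_half_pow_of_strict_subset
    {ν : Type} [Fintype ν] [DecidableEq ν] (G' : CausalGraph ν)
    (hnoDir : ∀ a b : ν, a ∈ G'.obs → b ∈ G'.obs → ¬ G'.E a b)
    (hconn : G'.SingleC G'.obs) (htree : G'.unobs.card = G'.obs.card - 1)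
    (ε : ℝ) (hε0 : 0 < ε) (hε1 : ε < 1)
    (V₁ : ν) (hV₁ : V₁ ∈ G'.obs)
    (M₁ M₂ : CausalGraph.SEM G')
    (hdom1 : ∀ i ∈ G'.verts, M₁.dom i = {0, 1})
    (hdom2 : ∀ i ∈ G'.verts, M₂.dom i = {0, 1})
    (hU1 : ∀ u ∈ G'.unobs, ∀ n ∈ ({0, 1} : Finset ℕ), M₁.pU u n = 1/2)
    (hU2 : ∀ u ∈ G'.unobs, ∀ n ∈ ({0, 1} : Finset ℕ), M₂.pU u n = 1/2)
    (hO1 : ∀ x ∈ G'.obs, ∀ n ∈ ({0, 1} : Finset ℕ), ∀ pa : ν → ℕ,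
      (∀ p, G'.E p x → pa p ∈ ({0, 1} : Finset ℕ)) →
      M₁.pO x n pa = (1 - ε) * (if n = G'.xorPa x pa then 1 else 0) + ε/2)
    (hO2 : ∀ x ∈ G'.obs, x ≠ V₁ → ∀ n ∈ ({0, 1} : Finset ℕ), ∀ pa : ν → ℕ,
      (∀ p, G'.E p x → pa p ∈ ({0, 1} : Finset ℕ)) →
      M₂.pO x n pa = (1 - ε) * (if n = G'.xorPa x pa then 1 else 0) + ε/2)
    (hO2V : ∀ n ∈ ({0, 1} : Finset ℕ), ∀ pa : ν → ℕ,
      (∀ p, G'.E p V₁ → pa p ∈ ({0, 1} : Finset ℕ)) →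
      M₂.pO V₁ n pa = (1 - ε) * (if n = 1 - G'.xorPa V₁ pa then 1 else 0) + ε/2) :
    ∀ A : Finset ν, A ⊂ G'.obs → ∀ v ∈ M₁.obsAssign,
      M₁.Q A v = 1 / 2 ^ A.card ∧ M₂.Q A v = 1 / 2 ^ A.card :=
  Q_eq_half_pow_of_strict_subset_general G' hconn ε V₁ M₁ M₂ hdom1 hdom2 hU1 hU2 hO1 hO2 hO2V
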